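/- Let D be a digraph with at least one arc. Then ⟨D⟩ is R-trivial if and only if D is acyclic. -/

import Mathlib

/-!
Every element `α` of `⟨D⟩` moves each vertex `w` only forward along `D`: `w` reaches `α w`.
If `y = x s` and `x = y t`, then `y w = s (x w)` and `x w = t (y w)`, so `x w` and `y w` reach
each other; in an acyclic digraph that forces `x w = y w`.

Conversely, given a cycle `v₀ → ⋯ → v_k → v₀` (with `k ≥ 1`, as there are no loops), the
product `x` of the arcs `(v₀, v₁), …, (v_{k-1}, v_k)` sends every `vᵢ` to `v_k` and fixes the other
vertices, and `y = x · (v_k → v₀)` sends every `vᵢ` to `v₀`. Then `y x = x`, so `x R y`, while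
`x v₀ = v_k ≠ v₀ = y v₀`.
-/

/-- The transformation of `{1,…,n}` sending `a` to `b` and fixing all other points. -/
def arcT {n : ℕ} (a b : Fin n) : Fin n → Fin n := fun v => if v = a then b else v

/-- The semigroup `⟨D⟩` generated by the arcs of the digraph `D`; transformations act on
the right, so a product `ε₁ε₂⋯ε_k` is the function `ε_k ∘ ⋯ ∘ ε₁`. -/
def genSg {n : ℕ} (D : Set (Fin n × Fin n)) : Set (Fin n → Fin n) :=
  { α | ∃ l : List (Fin n × Fin n), l ≠ [] ∧ (∀ p ∈ l, p ∈ D) ∧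
      α = l.foldl (fun f p => arcT p.1 p.2 ∘ f) id }

/-- The product `x·y` in the right-action convention: apply `x` first, then `y`. -/
def sgMul {n : ℕ} (x y : Fin n → Fin n) : Fin n → Fin n := y ∘ x

/-- The right ideal `xS¹ = {x} ∪ xS`. -/
def rIdeal {n : ℕ} (S : Set (Fin n → Fin n)) (x : Fin n → Fin n) : Set (Fin n → Fin n) :=
  insert x { y | ∃ s ∈ S, y = sgMul x s }

/-- The left ideal `S¹x = {x} ∪ Sx`. -/
def lIdeal {n : ℕ} (S : Set (Fin n → Fin n)) (x : Fin n → Fin n) : Set (Fin n → Fin n) :=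
  insert x { y | ∃ s ∈ S, y = sgMul s x }

/-- The two-sided ideal `S¹xS¹`. -/
def jIdeal {n : ℕ} (S : Set (Fin n → Fin n)) (x : Fin n → Fin n) : Set (Fin n → Fin n) :=
  { y | ∃ s ∈ insert id S, ∃ t ∈ insert id S, y = sgMul s (sgMul x t) }

def RRel {n : ℕ} (S : Set (Fin n → Fin n)) (x y : Fin n → Fin n) : Prop :=
  rIdeal S x = rIdeal S y

def LRel {n : ℕ} (S : Set (Fin n → Fin n)) (x y : Fin n → Fin n) : Prop :=
  lIdeal S x = lIdeal S y

def JRel {n : ℕ} (S : Set (Fin n → Fin n)) (x y : Fin n → Fin n) : Prop :=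
  jIdeal S x = jIdeal S y

def RTrivial {n : ℕ} (S : Set (Fin n → Fin n)) : Prop :=
  ∀ x ∈ S, ∀ y ∈ S, RRel S x y → x = y

def LTrivial {n : ℕ} (S : Set (Fin n → Fin n)) : Prop :=
  ∀ x ∈ S, ∀ y ∈ S, LRel S x y → x = y

def HTrivial {n : ℕ} (S : Set (Fin n → Fin n)) : Prop :=
  ∀ x ∈ S, ∀ y ∈ S, RRel S x y → LRel S x y → x = y

def JTrivial {n : ℕ} (S : Set (Fin n → Fin n)) : Prop :=
  ∀ x ∈ S, ∀ y ∈ S, JRel S x y → x = y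

/-- `α` has a cycle of length `k`: `k` distinct points `a₀,…,a_{k-1}` with
`α(aᵢ) = a_{i+1 mod k}`. -/
def IsCycleOf {n : ℕ} (α : Fin n → Fin n) (k : ℕ) : Prop :=
  0 < k ∧ ∃ a : ZMod k → Fin n, Function.Injective a ∧ ∀ i, α (a i) = a (i + 1)

/-- `l(D)`: the maximal length of a cycle of an element of `⟨D⟩`. -/
noncomputable def lD {n : ℕ} (D : Set (Fin n × Fin n)) : ℕ :=
  sSup { k | ∃ α ∈ genSg D, IsCycleOf α k }

/-- The arc set of a graph. -/
def arcsOf {n : ℕ} (G : SimpleGraph (Fin n)) : Set (Fin n × Fin n) :=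
  { p | G.Adj p.1 p.2 }

/-- `l(G)` for a graph `G`. -/
noncomputable def lG {n : ℕ} (G : SimpleGraph (Fin n)) : ℕ := lD (arcsOf G)

/-- Reachability along directed walks of `D`. -/
def dreach {n : ℕ} (D : Set (Fin n × Fin n)) : Fin n → Fin n → Prop :=
  Relation.ReflTransGen (fun a b => (a, b) ∈ D)

/-- The strong component of the vertex `v`. -/
def strongComp {n : ℕ} (D : Set (Fin n × Fin n)) (v : Fin n) : Set (Fin n) :=
  { u | dreach D u v ∧ dreach D v u }

/-- The underlying graph of the digraph `D`. -/
def underlying {n : ℕ} (D : Set (Fin n × Fin n)) : SimpleGraph (Fin n) where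
  Adj a b := a ≠ b ∧ ((a, b) ∈ D ∨ (b, a) ∈ D)
  symm := ⟨fun a b h => ⟨h.1.symm, h.2.symm⟩⟩
  loopless := ⟨fun a h => h.1 rfl⟩

/-- `v 0, v 1, …, v r` is a cycle of the digraph `D`. -/
def IsDCycle {n : ℕ} (D : Set (Fin n × Fin n)) (r : ℕ) (v : ℕ → Fin n) : Prop :=
  1 ≤ r ∧ v r = v 0 ∧ (∀ i < r, ∀ j < r, v i = v j → i = j) ∧
    ∀ i < r, (v i, v (i + 1)) ∈ D

def HasDCycle {n : ℕ} (D : Set (Fin n × Fin n)) : Prop := ∃ r v, IsDCycle D r v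

def DAcyclic {n : ℕ} (D : Set (Fin n × Fin n)) : Prop := ¬ HasDCycle D

/-- `G` is a subgroup contained in the transformation semigroup `S`. -/
def IsSubgroupIn {n : ℕ} (S G : Set (Fin n → Fin n)) : Prop :=
  G ⊆ S ∧ (∀ x ∈ G, ∀ y ∈ G, sgMul x y ∈ G) ∧
    ∃ e ∈ G, (∀ x ∈ G, sgMul e x = x ∧ sgMul x e = x) ∧
      ∀ x ∈ G, ∃ y ∈ G, sgMul x y = e ∧ sgMul y x = e

/-- Every subgroup of `S` is trivial. -/
def SgAperiodic {n : ℕ} (S : Set (Fin n → Fin n)) : Prop :=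
  ∀ G, IsSubgroupIn S G → G.Subsingleton

variable {n : ℕ} {D : Set (Fin n × Fin n)}

lemma arcT_self (a b : Fin n) : arcT a b b = b := by
  unfold arcT; split_ifs with h <;> simp [h]

lemma foldl_arcT_eq_comp (l : List (Fin n × Fin n)) (g : Fin n → Fin n) :
    l.foldl (fun f p => arcT p.1 p.2 ∘ f) g = l.foldl (fun f p => arcT p.1 p.2 ∘ f) id ∘ g := by
  induction l generalizing g with
  | nil => rfl
  | cons p l ih => simp only [List.foldl_cons, ih (arcT p.1 p.2 ∘ g), ih (arcT p.1 p.2 ∘ id)]; rfl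

lemma arcT_mem_genSg {a b : Fin n} (hab : (a, b) ∈ D) : arcT a b ∈ genSg D :=
  ⟨[(a, b)], List.cons_ne_nil _ _, by simpa using hab, rfl⟩

lemma sgMul_mem_genSg {x y : Fin n → Fin n} (hx : x ∈ genSg D) (hy : y ∈ genSg D) :
    sgMul x y ∈ genSg D := by
  obtain ⟨l₁, hl₁, hl₁D, rfl⟩ := hx
  obtain ⟨l₂, -, hl₂D, rfl⟩ := hy
  refine ⟨l₁ ++ l₂, by simp [hl₁], fun p hp => ?_, ?_⟩
  · rcases List.mem_append.1 hp with h | h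
    exacts [hl₁D p h, hl₂D p h]
  · rw [List.foldl_append]
    exact (foldl_arcT_eq_comp l₂ _).symm

lemma rRel_of_eq_sgMul {x y s t : Fin n → Fin n} (hs : s ∈ genSg D) (ht : t ∈ genSg D)
    (hy : y = sgMul x s) (hx : x = sgMul y t) : RRel (genSg D) x y := by
  ext z
  simp only [rIdeal, Set.mem_insert_iff, Set.mem_ofPred_eq]
  constructor
  · rintro (rfl | ⟨u, hu, rfl⟩)
    · exact Or.inr ⟨t, ht, hx⟩
    · exact Or.inr ⟨sgMul t u, sgMul_mem_genSg ht hu, by rw [hx]; rfl⟩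
  · rintro (rfl | ⟨u, hu, rfl⟩)
    · exact Or.inr ⟨s, hs, hy⟩
    · exact Or.inr ⟨sgMul s u, sgMul_mem_genSg hs hu, by rw [hy]; rfl⟩

section Acyclic

lemma dreach_arcT {a b : Fin n} (hab : (a, b) ∈ D) (u : Fin n) : dreach D u (arcT a b u) := by
  unfold arcT
  split_ifs with h
  · exact .single (h ▸ hab)
  · exact .refl

lemma dreach_apply_of_mem_genSg {α : Fin n → Fin n} (hα : α ∈ genSg D) (w : Fin n) :
    dreach D w (α w) := by
  obtain ⟨l, -, hlD, rfl⟩ := hα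
  suffices ∀ g : Fin n → Fin n, (∀ w, dreach D w (g w)) →
      ∀ w, dreach D w (l.foldl (fun f p => arcT p.1 p.2 ∘ f) g w) from
    this id (fun _ => .refl) w
  induction l with
  | nil => exact fun g hg => hg
  | cons p l ih =>
    intro g hg
    exact ih (fun q hq => hlD q (.tail p hq)) _
      fun w => (hg w).trans (dreach_arcT (hlD p List.mem_cons_self) (g w))

lemma exists_walk_of_transGen {a b : Fin n} (h : Relation.TransGen (fun a b => (a, b) ∈ D) a b) :
    ∃ r, 1 ≤ r ∧ ∃ v : ℕ → Fin n, v 0 = a ∧ v r = b ∧ ∀ i < r, (v i, v (i + 1)) ∈ D := by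
  induction h with
  | single hab =>
    refine ⟨1, le_rfl, Function.update (fun _ => _) 0 a, rfl, rfl, fun i hi => ?_⟩
    obtain rfl : i = 0 := by omega
    simpa using hab
  | @tail c d _ hcd ih =>
    obtain ⟨r, hr, v, hv0, hvr, harc⟩ := ih
    refine ⟨r + 1, by omega, Function.update v (r + 1) d, ?_, by simp, fun i hi => ?_⟩
    · rw [Function.update_of_ne (by omega), hv0]
    · rw [Function.update_of_ne (by omega)]
      rcases Nat.lt_succ_iff_lt_or_eq.1 hi with hi | rfl
      · rw [Function.update_of_ne (by omega)]
        exact harc i hi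
      · simpa [hvr] using hcd

lemma hasDCycle_of_closed_walk {r : ℕ} (hr : 1 ≤ r) {v : ℕ → Fin n} (hvr : v r = v 0)
    (harc : ∀ i < r, (v i, v (i + 1)) ∈ D) : HasDCycle D := by
  induction r using Nat.strong_induction_on generalizing v with
  | _ r ih =>
    by_cases hinj : ∀ i < r, ∀ j < r, v i = v j → i = j
    · exact ⟨r, v, hr, hvr, hinj, harc⟩
    have shift : ∀ i j, i < j → j < r → v i = v j → HasDCycle D := fun i j hij hj hv =>
      ih (j - i) (by omega) (by omega) (v := fun k => v (i + k))
        (by simpa [Nat.add_sub_cancel' hij.le] using hv.symm)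
        (fun k hk => by simpa [Nat.add_assoc] using harc (i + k) (by omega))
    push Not at hinj
    obtain ⟨i, hi, j, hj, hv, hij⟩ := hinj
    rcases Nat.lt_or_gt_of_ne hij with h | h
    exacts [shift i j h hj hv, shift j i h hi hv.symm]

lemma eq_of_dreach_of_dreach (hD : DAcyclic D) {a b : Fin n} (hab : dreach D a b)
    (hba : dreach D b a) : a = b := by
  rcases Relation.reflTransGen_iff_eq_or_transGen.1 hab with h | hab
  · exact h.symm
  obtain ⟨r, hr, v, hv0, hvr, harc⟩ := exists_walk_of_transGen (hab.trans_left hba)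
  exact (hD (hasDCycle_of_closed_walk hr (hvr.trans hv0.symm) harc)).elim

lemma rTrivial_of_dAcyclic (hD : DAcyclic D) : RTrivial (genSg D) := by
  intro x _ y _ hR
  have hy : y ∈ rIdeal (genSg D) x := hR ▸ Set.mem_insert y _
  have hx : x ∈ rIdeal (genSg D) y := hR.symm ▸ Set.mem_insert x _
  obtain h | ⟨t, ht, hxt⟩ := hx
  · exact h
  obtain h | ⟨s, hs, hys⟩ := hy
  · exact h.symm
  funext w
  have hxy : dreach D (x w) (y w) := hys ▸ dreach_apply_of_mem_genSg hs (x w)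
  have hyx : dreach D (y w) (x w) := hxt ▸ dreach_apply_of_mem_genSg ht (y w)
  exact eq_of_dreach_of_dreach hD hxy hyx

end Acyclic

section Cycle

def pathProd (v : ℕ → Fin n) : ℕ → Fin n → Fin n
  | 0 => id
  | m + 1 => arcT (v m) (v (m + 1)) ∘ pathProd v m

lemma pathProd_mem_genSg {v : ℕ → Fin n} {m : ℕ} (harc : ∀ i < m, (v i, v (i + 1)) ∈ D)
    (hm : 1 ≤ m) : pathProd v m ∈ genSg D := by
  induction m with
  | zero => omega
  | succ m ih =>
    rcases Nat.eq_zero_or_pos m with rfl | hm_pos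
    · exact arcT_mem_genSg (harc 0 zero_lt_one)
    · exact sgMul_mem_genSg (ih (fun i hi => harc i (by omega)) hm_pos)
        (arcT_mem_genSg (harc m m.lt_succ_self))

lemma pathProd_apply_of_forall_ne {v : ℕ → Fin n} {m : ℕ} {u : Fin n}
    (hu : ∀ i < m, u ≠ v i) : pathProd v m u = u := by
  induction m with
  | zero => rfl
  | succ m ih =>
    simp only [pathProd, Function.comp_apply, ih (fun i hi => hu i (by omega))]
    exact if_neg (hu m m.lt_succ_self)

lemma pathProd_apply_of_le {v : ℕ → Fin n} {m i : ℕ} (hinj : Set.InjOn v (Set.Iic m))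
    (hi : i ≤ m) : pathProd v m (v i) = v m := by
  induction m with
  | zero =>
    obtain rfl : i = 0 := by omega
    rfl
  | succ m ih =>
    rcases Nat.lt_succ_iff_lt_or_eq.1 (Nat.lt_succ_of_le hi) with hi | rfl
    · simp only [pathProd, Function.comp_apply,
        ih (hinj.mono (Set.Iic_subset_Iic.2 m.le_succ)) (Nat.lt_succ_iff.1 hi)]
      exact if_pos rfl
    · have hfix : pathProd v m (v (m + 1)) = v (m + 1) :=
        pathProd_apply_of_forall_ne fun j hj h =>
          absurd (hinj (Set.mem_Iic.2 le_rfl) (Set.mem_Iic.2 (by omega)) h) (by omega)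
      simp only [pathProd, Function.comp_apply, hfix, arcT_self]

lemma not_rTrivial_of_hasDCycle (hloop : ∀ u : Fin n, (u, u) ∉ D) (hcyc : HasDCycle D) :
    ¬ RTrivial (genSg D) := by
  obtain ⟨r, v, hr, hvr, hinj, harc⟩ := hcyc
  obtain ⟨k, rfl⟩ : ∃ k, r = k + 1 := ⟨r - 1, by omega⟩
  have hk : 1 ≤ k := by
    by_contra hk
    obtain rfl : k = 0 := by omega
    exact hloop (v 0) (hvr ▸ harc 0 zero_lt_one)
  have hinjk : Set.InjOn v (Set.Iic k) := fun i hi j hj h =>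
    hinj i (Nat.lt_succ_of_le hi) j (Nat.lt_succ_of_le hj) h
  set x := pathProd v k
  set ε := arcT (v k) (v (k + 1))
  have hx : x ∈ genSg D := pathProd_mem_genSg (fun i hi => harc i (by omega)) hk
  have hε : ε ∈ genSg D := arcT_mem_genSg (harc k k.lt_succ_self)
  have hx_cycle : ∀ i ≤ k, x (v i) = v k := fun i hi => pathProd_apply_of_le hinjk hi
  have hx_eq : x = sgMul (sgMul x ε) x := by
    funext u
    by_cases hu : ∃ i ≤ k, u = v i
    · obtain ⟨i, hi, rfl⟩ := hu
      simp [sgMul, hx_cycle i hi, ε, arcT, hvr, hx_cycle 0 (Nat.zero_le k)]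
    · push Not at hu
      have hxu : x u = u := pathProd_apply_of_forall_ne fun i hi => hu i hi.le
      simp only [sgMul, Function.comp_apply, hxu, ε, arcT, if_neg (hu k le_rfl)]
  intro hRT
  have hxy := hRT x hx _ (sgMul_mem_genSg hx hε) (rRel_of_eq_sgMul hε hx rfl hx_eq)
  have h0 : v k = v 0 := by
    simpa [sgMul, hx_cycle 0 (Nat.zero_le k), ε, arcT, hvr] using congrFun hxy (v 0)
  exact absurd (hinjk (Set.mem_Iic.2 le_rfl) (Set.mem_Iic.2 (Nat.zero_le k)) h0) (by omega)

end Cycle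

theorem stmt11_general (n : ℕ) (D : Set (Fin n × Fin n)) (hloop : ∀ u : Fin n, (u, u) ∉ D) :
    RTrivial (genSg D) ↔ DAcyclic D :=
  ⟨fun hRT hcyc => not_rTrivial_of_hasDCycle hloop hcyc hRT, rTrivial_of_dAcyclic⟩

/-- `⟨D⟩` is `R`-trivial iff `D` is acyclic. -/
theorem stmt11 (n : ℕ) (D : Set (Fin n × Fin n)) (hloop : ∀ u : Fin n, (u, u) ∉ D)
    (hne : D.Nonempty) :
    RTrivial (genSg D) ↔ DAcyclic D :=
  stmt11_general n D hloop
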